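/- arXiv:math/0203150 — 3 statements merged into one kernel-verified Lean document; each statement's English description precedes it below -/
import Mathlib

section
/- Let f ∈ ℂ[x,y] be in normal form with n = deg f > 1, let λ₀ ∈ ℂ, and let D ≥ 1 and β₁,…,β_n, γ₁,…,γ_{n−1} be meromorphic at infinity with deg β_i ≤ D, deg γ_j ≤ D, f(t^D,y) − λ₀ = ∏_{i=1}^{n}(y − β_i(t)) and f'_y(t^D,y) = n∏_{j=1}^{n−1}(y − γ_j(t)). Set Ψ_l(t) := (t^D, γ_l(t)) for l = 1,…,n−1. Then min_{i=1}^{n} ( Σ_{j=1, j≠i}^{n} deg(β_i − β_j) + min_{j=1, j≠i}^{n} deg(β_i − β_j) ) = min_{l=1}^{n−1} deg((f − λ₀) ∘ Ψ_l). -/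
open Polynomial

noncomputable section
open scoped Classical

def MeroInf (φ : ℂ → ℂ) : Prop := MeromorphicAt (fun t => φ t⁻¹) 0

noncomputable def degInf (φ : ℂ → ℂ) : EReal :=
  if h : MeroInf φ then
    WithTop.recTopCoe (⊥ : EReal) (fun z : ℤ => (((-z : ℤ) : ℝ) : EReal)) (meromorphicOrderAt (fun t => φ t⁻¹) 0)
  else ⊥

noncomputable def lojInfOn {E F : Type*} [NormedAddCommGroup E] [NormedAddCommGroup F]
    (f : E → F) (S : Set E) : EReal :=
  sSup (Real.toEReal '' {ν : ℝ | ∃ A B : ℝ, 0 < A ∧ 0 < B ∧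
    ∀ z ∈ S, B < ‖z‖ → A * Real.rpow ‖z‖ ν ≤ ‖f z‖})

def sylvester {R : Type*} [CommRing R] (p q : Polynomial R) (m n : ℕ) :
    Matrix (Fin (n + m)) (Fin (n + m)) R :=
  Matrix.of fun i j =>
    Fin.addCases
      (fun i₁ : Fin n => if (i₁ : ℕ) ≤ (j : ℕ) then p.coeff ((j : ℕ) - i₁) else 0)
      (fun i₂ : Fin m => if (i₂ : ℕ) ≤ (j : ℕ) then q.coeff ((j : ℕ) - i₂) else 0) i

noncomputable def resultant {R : Type*} [CommRing R] (p q : Polynomial R) : R :=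
  (_root_.sylvester p q p.natDegree q.natDegree).det

/-! 2-dimensional machinery, `f : (ℂ[x])[y]` -/

noncomputable def pval (f : Polynomial (Polynomial ℂ)) (x y : ℂ) : ℂ :=
  (f.map (evalRingHom x)).eval y

noncomputable def pderivX (f : Polynomial (Polynomial ℂ)) : Polynomial (Polynomial ℂ) :=
  f.sum fun i a => C (derivative a) * X ^ i

def NormalForm (f : Polynomial (Polynomial ℂ)) : Prop :=
  f.Monic ∧ ∀ i, (f.coeff i).natDegree ≤ f.natDegree - i

noncomputable def pgrad (f : Polynomial (Polynomial ℂ)) (z : ℂ × ℂ) : ℂ × ℂ :=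
  (pval (pderivX f) z.1 z.2, pval (derivative f) z.1 z.2)

def Sy (f : Polynomial (Polynomial ℂ)) : Set (ℂ × ℂ) :=
  {z | pval (derivative f) z.1 z.2 = 0}

def Sfib (f : Polynomial (Polynomial ℂ)) (lam : ℂ) : Set (ℂ × ℂ) :=
  {z | pval f z.1 z.2 = lam}

noncomputable def lojFiber2 (f : Polynomial (Polynomial ℂ)) (lam : ℂ) : EReal :=
  sInf {r : EReal | ∃ φ ψ : ℂ → ℂ, MeroInf φ ∧ MeroInf ψ ∧
    0 < max (degInf φ) (degInf ψ) ∧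
    degInf (fun t => pval f (φ t) (ψ t) - lam) < 0 ∧
    r = max (degInf fun t => pval (pderivX f) (φ t) (ψ t))
          (degInf fun t => pval (derivative f) (φ t) (ψ t)) / max (degInf φ) (degInf ψ)}

noncomputable def Qres (f : Polynomial (Polynomial ℂ)) :
    Polynomial (MvPolynomial (Fin 2) ℂ) :=
  let F : Polynomial (Polynomial (MvPolynomial (Fin 2) ℂ)) :=
    f.map (mapRingHom (MvPolynomial.C))
  _root_.resultant (F - C (C (MvPolynomial.X 0))) (derivative F - C (C (MvPolynomial.X 1)))

noncomputable def Qc (f : Polynomial (Polynomial ℂ)) (i : ℕ) : MvPolynomial (Fin 2) ℂ :=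
  (Qres f).coeff ((Qres f).natDegree - i)

noncomputable def Rres (f : Polynomial (Polynomial ℂ)) : Polynomial (Polynomial ℂ) :=
  let F : Polynomial (Polynomial (Polynomial ℂ)) := f.map (mapRingHom C)
  _root_.resultant (F - C (C X)) (derivative F)

def LambdaSet (f : Polynomial (Polynomial ℂ)) : Set ℂ :=
  {lam | ((Rres f).leadingCoeff).eval lam = 0}

noncomputable def ordAt (P : MvPolynomial (Fin 2) ℂ) (lam0 : ℂ) : EReal :=
  let P' : MvPolynomial (Fin 2) ℂ :=
    MvPolynomial.aeval ![MvPolynomial.C lam0 + MvPolynomial.X 0, MvPolynomial.X 1] P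
  if P' = 0 then ⊤
  else (((sInf {d : ℕ | ∃ m ∈ P'.support, m 0 + m 1 = d} : ℕ) : ℝ) : EReal)

noncomputable def Qu (P : MvPolynomial (Fin 2) ℂ) (lam0 : ℂ) : Polynomial ℂ :=
  MvPolynomial.aeval ![Polynomial.C lam0, Polynomial.X] P

/-! n-dimensional machinery -/

noncomputable def mval {n : ℕ} (f : MvPolynomial (Fin n) ℂ) (z : Fin n → ℂ) : ℂ :=
  MvPolynomial.eval z f

noncomputable def mgrad {n : ℕ} (f : MvPolynomial (Fin n) ℂ) (z : Fin n → ℂ) : Fin n → ℂ :=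
  fun i => MvPolynomial.eval z (MvPolynomial.pderiv i f)

def IsMeroCurve {n : ℕ} (Φ : ℂ → Fin n → ℂ) : Prop := ∀ i, MeroInf fun t => Φ t i

noncomputable def degCurve {n : ℕ} (Φ : ℂ → Fin n → ℂ) : EReal :=
  ⨆ i, degInf fun t => Φ t i

noncomputable def lojFiber {n : ℕ} (f : MvPolynomial (Fin n) ℂ) (lam : ℂ) : EReal :=
  sInf {r : EReal | ∃ Φ : ℂ → Fin n → ℂ, IsMeroCurve Φ ∧ 0 < degCurve Φ ∧
    degInf (fun t => mval f (Φ t) - lam) < 0 ∧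
    r = degCurve (fun t => mgrad f (Φ t)) / degCurve Φ}

noncomputable def lojTilde {n : ℕ} (f : MvPolynomial (Fin n) ℂ) (lam : ℂ) : EReal :=
  ⨆ δ : {d : ℝ // 0 < d}, lojInfOn (mgrad f) (mval f ⁻¹' Metric.ball lam δ.1)

def Kinf {n : ℕ} (f : MvPolynomial (Fin n) ℂ) : Set ℂ :=
  {lam | ¬ ∃ η δ R : ℝ, 0 < η ∧ 0 < δ ∧ 0 < R ∧
    ∀ p : Fin n → ℂ, R < ‖p‖ → ‖mval f p - lam‖ < δ → η < ‖p‖ * ‖mgrad f p‖}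

def KinfTilde {n : ℕ} (f : MvPolynomial (Fin n) ℂ) : Set ℂ :=
  {lam | ¬ ∃ η δ R : ℝ, 0 < η ∧ 0 < δ ∧ 0 < R ∧
    ∀ p : Fin n → ℂ, R < ‖p‖ → ‖mval f p - lam‖ < δ → η < ‖mgrad f p‖}

/-!
Write `ord = -deg` for the order at infinity, a non-archimedean valuation. For large `t` the `γ_l`
are the critical points of `P = ∏ i, (y - βᵢ)`, which yields three identities:
`P'(βᵢ) = ∏_{j ≠ i} (βᵢ - βⱼ) = n ∏_l (βᵢ - γ_l)`, `P'(γ_l) = ∑_k ∏_{j ≠ k} (γ_l - βⱼ) = 0`, and,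
comparing coefficients of `P(βᵢ + y)` and of its derivative,
`(n - s) e_s(βᵢ - βⱼ : j ≠ i) = n e_s(βᵢ - γ_l : l)`.
The first gives `∑_{j ≠ i} ord(βᵢ - βⱼ) = ∑_l ord(βᵢ - γ_l)`. In the second no term can have
strictly least order, so some other root `βⱼ` is at least as close to `βᵢ` as `γ_l` is. In the
third, take `s` to be the number of roots farther from `βᵢ` than its nearest neighbour: then the
left side has a unique dominant term, and comparing with the first identity shows that some `γ_l`
is at least as close to `βᵢ` as that neighbour. Since `deg((f - λ₀) ∘ Ψ_l) = ∑ᵢ deg(γ_l - βᵢ)`, the ultrametric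
inequality turns the second fact, applied to the root closest to `γ_l`, and the third one into
bounds of each side of the theorem by the other.
-/

open Filter Bornology Finset Lagrange

def ordInf (φ : ℂ → ℂ) : WithTop ℤ := meromorphicOrderAt (fun t => φ t⁻¹) 0

def degOfOrd : WithTop ℤ →+ EReal where
  toFun := WithTop.recTopCoe ⊥ fun z : ℤ => (((-z : ℤ) : ℝ) : EReal)
  map_zero' := by simp [← WithTop.coe_zero]
  map_add' a b := by
    cases a with
    | top => simp
    | coe a =>
      cases b with
      | top => simp
      | coe b =>
        show (((-(a + b) : ℤ) : ℝ) : EReal) = (((-a : ℤ) : ℝ) : EReal) + (((-b : ℤ) : ℝ) : EReal)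
        exact_mod_cast (by push_cast; ring : ((-(a + b) : ℤ) : ℝ) = ((-a : ℤ) : ℝ) + ((-b : ℤ) : ℝ))

lemma degOfOrd_antitone : Antitone degOfOrd := by
  intro a b hab
  cases b with
  | top => exact bot_le
  | coe b =>
    lift a to ℤ using ne_top_of_le_ne_top WithTop.coe_ne_top hab
    simpa [degOfOrd] using WithTop.coe_le_coe.mp hab

lemma degInf_eq_degOfOrd {φ : ℂ → ℂ} (hφ : MeroInf φ) : degInf φ = degOfOrd (ordInf φ) :=
  dif_pos hφ

namespace MeroInf

variable {φ ψ : ℂ → ℂ}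

lemma sub (hφ : MeroInf φ) (hψ : MeroInf ψ) : MeroInf fun t => φ t - ψ t :=
  MeromorphicAt.sub hφ hψ

lemma prod {ι : Type*} {s : Finset ι} {φ : ι → ℂ → ℂ} (h : ∀ i ∈ s, MeroInf (φ i)) :
    MeroInf fun t => ∏ i ∈ s, φ i t :=
  MeromorphicAt.fun_prod h

lemma sum {ι : Type*} {s : Finset ι} {φ : ι → ℂ → ℂ} (h : ∀ i ∈ s, MeroInf (φ i)) :
    MeroInf fun t => ∑ i ∈ s, φ i t :=
  MeromorphicAt.fun_sum h

lemma congr (hφ : MeroInf φ) (h : φ =ᶠ[cobounded ℂ] ψ) : MeroInf ψ :=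
  MeromorphicAt.congr hφ (tendsto_inv₀_nhdsNE_zero.eventually h)

end MeroInf

section ordInf

variable {φ ψ χ : ℂ → ℂ}

lemma ordInf_congr (h : φ =ᶠ[cobounded ℂ] ψ) : ordInf φ = ordInf ψ :=
  meromorphicOrderAt_congr (tendsto_inv₀_nhdsNE_zero.eventually h)

lemma ordInf_eq_top_of_eventually_eq_zero (h : ∀ᶠ t in cobounded ℂ, φ t = 0) : ordInf φ = ⊤ :=
  meromorphicOrderAt_eq_top_iff.mpr (tendsto_inv₀_nhdsNE_zero.eventually h)

lemma ordInf_sub_comm : (ordInf fun t => φ t - ψ t) = ordInf fun t => ψ t - φ t := by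
  simp only [ordInf, meromorphicOrderAt_fun_neg (f := fun t => φ t⁻¹ - ψ t⁻¹), neg_sub]

lemma ordInf_const_mul {c : ℂ} (hc : c ≠ 0) (hφ : MeroInf φ) :
    (ordInf fun t => c * φ t) = ordInf φ := by
  have := meromorphicOrderAt_mul (MeromorphicAt.const c (0 : ℂ)) hφ
  rwa [meromorphicOrderAt_const, if_neg hc, zero_add] at this

lemma ordInf_prod {ι : Type*} {s : Finset ι} {φ : ι → ℂ → ℂ} (h : ∀ i ∈ s, MeroInf (φ i)) :
    (ordInf fun t => ∏ i ∈ s, φ i t) = ∑ i ∈ s, ordInf (φ i) :=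
  meromorphicOrderAt_fun_prod h

lemma min_ordInf_sub_le (hφ : MeroInf φ) (hψ : MeroInf ψ) (hχ : MeroInf χ) :
    min (ordInf fun t => φ t - ψ t) (ordInf fun t => ψ t - χ t) ≤ ordInf fun t => φ t - χ t := by
  simpa [ordInf, Pi.add_def] using meromorphicOrderAt_add (hφ.sub hψ) (hψ.sub hχ)

lemma inf_ordInf_le_ordInf_sum {ι : Type*} {s : Finset ι} {φ : ι → ℂ → ℂ}
    (h : ∀ i ∈ s, MeroInf (φ i)) :
    s.inf (fun i => ordInf (φ i)) ≤ ordInf fun t => ∑ i ∈ s, φ i t := by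
  classical
  induction s using Finset.induction_on with
  | empty => simp [ordInf_eq_top_of_eventually_eq_zero]
  | insert a s ha ih =>
    have hs : ∀ i ∈ s, MeroInf (φ i) := fun i hi => h i (mem_insert_of_mem hi)
    simp only [inf_insert, sum_insert ha]
    exact (inf_le_inf_left _ (ih hs)).trans
      (meromorphicOrderAt_add (h a (mem_insert_self a s)) (MeroInf.sum hs))

lemma ordInf_sum_of_lt {ι : Type*} {s : Finset ι} {φ : ι → ℂ → ℂ} {i : ι}
    (h : ∀ i ∈ s, MeroInf (φ i)) (hi : i ∈ s) (hfin : ordInf (φ i) ≠ ⊤)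
    (hlt : ∀ k ∈ s, k ≠ i → ordInf (φ i) < ordInf (φ k)) :
    (ordInf fun t => ∑ k ∈ s, φ k t) = ordInf (φ i) := by
  classical
  have hs : ∀ k ∈ s.erase i, MeroInf (φ k) := fun k hk => h k (mem_of_mem_erase hk)
  have hrest : ordInf (φ i) < ordInf fun t => ∑ k ∈ s.erase i, φ k t :=
    ((Finset.lt_inf_iff (WithTop.lt_top_iff_ne_top.mpr hfin)).mpr
      fun k hk => hlt k (mem_of_mem_erase hk) (ne_of_mem_erase hk)).trans_le
      (inf_ordInf_le_ordInf_sum hs)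
  simp only [← add_sum_erase s _ hi]
  exact meromorphicOrderAt_add_eq_left_of_lt (MeroInf.sum hs) hrest

end ordInf

lemma Finset.sum_filter_lt_lt_sum {ι M : Type*} [AddCommMonoid M] [LinearOrder M]
    [IsOrderedCancelAddMonoid M] {s B : Finset ι} {b : ι → M} {m : M}
    (hbm : ∀ j ∈ s, b j ≤ m) (hB : B ⊆ s) (hcard : #B = #{j ∈ s | b j < m})
    (hne : B ≠ {j ∈ s | b j < m}) :
    ∑ j ∈ s with b j < m, b j < ∑ j ∈ B, b j := by
  set A := {j ∈ s | b j < m}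
  have hAB : (A \ B).Nonempty :=
    sdiff_nonempty.mpr fun hsub => hne (eq_of_subset_of_card_le hsub hcard.le).symm
  have hBA : ∀ j ∈ B \ A, b j = m := fun j hj => by
    obtain ⟨hjB, hjA⟩ := mem_sdiff.mp hj
    exact (hbm j (hB hjB)).antisymm (not_lt.mp fun h => hjA (mem_filter.mpr ⟨hB hjB, h⟩))
  rw [← sum_inter_add_sum_sdiff A B, ← sum_inter_add_sum_sdiff B A, inter_comm]
  refine (add_lt_add_iff_left _).mpr ?_
  calc ∑ j ∈ A \ B, b j < ∑ _j ∈ A \ B, m :=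
        sum_lt_sum_of_nonempty hAB fun j hj => (mem_filter.mp (mem_sdiff.mp hj).1).2
    _ = ∑ j ∈ B \ A, b j := by
        rw [sum_const, sum_congr rfl hBA, sum_const, card_sdiff_comm hcard.symm]

lemma Finset.sum_filter_lt_lt_sum_of_sum_eq {ι κ M : Type*} [AddCommMonoid M] [LinearOrder M]
    [IsOrderedCancelAddMonoid M] {s : Finset ι} {t C : Finset κ} {b : ι → M} {a : κ → M} {m : M}
    (hbm : ∀ j ∈ s, b j ≤ m) (ham : ∀ l ∈ t, a l < m) (hsum : ∑ j ∈ s, b j = ∑ l ∈ t, a l)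
    (hst : #s = #t) (hC : C ⊆ t) (hcard : #C = #{j ∈ s | b j < m}) (hCt : #C < #t) :
    ∑ j ∈ s with b j < m, b j < ∑ l ∈ C, a l := by
  set A := {j ∈ s | b j < m}
  have hrestA : ∑ j ∈ s \ A, b j = #(s \ A) • m := by
    rw [← sum_const]
    refine sum_congr rfl fun j hj => ?_
    obtain ⟨hj, hjA⟩ := mem_sdiff.mp hj
    exact (hbm j hj).antisymm (not_lt.mp fun h => hjA (mem_filter.mpr ⟨hj, h⟩))
  have hrestC : ∑ l ∈ t \ C, a l < #(s \ A) • m := by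
    rw [card_sdiff_of_subset (filter_subset _ _), ← hcard, hst, ← card_sdiff_of_subset hC,
      ← sum_const]
    exact sum_lt_sum_of_nonempty (sdiff_nonempty.mpr fun h => (card_le_card h).not_gt hCt)
      fun l hl => ham l (mem_sdiff.mp hl).1
  refine lt_of_add_lt_add_right (a := #(s \ A) • m) ?_
  calc ∑ j ∈ A, b j + #(s \ A) • m = ∑ l ∈ t, a l := by
        rw [← hrestA, add_comm, sum_sdiff (filter_subset _ _), hsum]
    _ = ∑ l ∈ C, a l + ∑ l ∈ t \ C, a l := by rw [add_comm, sum_sdiff hC]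
    _ < ∑ l ∈ C, a l + #(s \ A) • m := by gcongr

lemma ordInf_sum_powersetCard_prod_eq {ι : Type*} {s : Finset ι} {φ : ι → ℂ → ℂ}
    {b : ι → ℤ} {m : ℤ} (hφ : ∀ j ∈ s, MeroInf (φ j)) (hb : ∀ j ∈ s, ordInf (φ j) = b j)
    (hbm : ∀ j ∈ s, b j ≤ m) :
    (ordInf fun t => ∑ B ∈ s.powersetCard #{j ∈ s | b j < m}, ∏ j ∈ B, φ j t) =
      ((∑ j ∈ s with b j < m, b j : ℤ) : WithTop ℤ) := by
  have hord : ∀ B ∈ s.powersetCard #{j ∈ s | b j < m},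
      (ordInf fun t => ∏ j ∈ B, φ j t) = ((∑ j ∈ B, b j : ℤ) : WithTop ℤ) := fun B hB => by
    have hBs := (mem_powersetCard.mp hB).1
    rw [ordInf_prod fun j hj => hφ j (hBs hj), WithTop.coe_sum]
    exact sum_congr rfl fun j hj => hb j (hBs hj)
  have hA : {j ∈ s | b j < m} ∈ s.powersetCard #{j ∈ s | b j < m} :=
    mem_powersetCard.mpr ⟨filter_subset _ _, rfl⟩
  rw [ordInf_sum_of_lt (fun B hB => MeroInf.prod fun j hj => hφ j ((mem_powersetCard.mp hB).1 hj))
    hA (by simp [hord _ hA]), hord _ hA]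
  intro B hB hne
  rw [hord _ hA, hord _ hB, WithTop.coe_lt_coe]
  exact sum_filter_lt_lt_sum hbm (mem_powersetCard.mp hB).1 (mem_powersetCard.mp hB).2 hne

lemma lt_ordInf_sum_powersetCard_prod {ι : Type*} {s : Finset ι} {ψ : ι → ℂ → ℂ} {a : ι → ℤ}
    {W : ℤ} {r : ℕ} (hψ : ∀ l ∈ s, MeroInf (ψ l)) (ha : ∀ l ∈ s, ordInf (ψ l) = a l)
    (hW : ∀ C ∈ s.powersetCard r, W < ∑ l ∈ C, a l) :
    (W : WithTop ℤ) < ordInf fun t => ∑ C ∈ s.powersetCard r, ∏ l ∈ C, ψ l t := by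
  refine ((Finset.lt_inf_iff (WithTop.coe_lt_top W)).mpr fun C hC => ?_).trans_le
    (inf_ordInf_le_ordInf_sum fun C hC =>
      MeroInf.prod fun l hl => hψ l ((mem_powersetCard.mp hC).1 hl))
  have hCs := (mem_powersetCard.mp hC).1
  rw [ordInf_prod fun l hl => hψ l (hCs hl), sum_congr rfl fun l hl => ha l (hCs hl),
    ← WithTop.coe_sum, WithTop.coe_lt_coe]
  exact hW C hC

section nodal

variable {R : Type*} [CommRing R] {n : ℕ} {c : Fin n → R} {d : Fin (n - 1) → R}

lemma prod_erase_sub_eq_of_derivative_nodal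
    (hcd : derivative (nodal univ c) = C (n : R) * nodal univ d) (i : Fin n) :
    ∏ j ∈ univ.erase i, (c i - c j) = n * ∏ l, (c i - d l) := by
  have := congrArg (eval (c i)) hcd
  rwa [eval_nodal_derivative_eval_node_eq (mem_univ i), eval_mul, eval_C, eval_nodal,
    eval_nodal] at this

lemma sum_prod_erase_sub_eq_zero_of_derivative_nodal
    (hcd : derivative (nodal univ c) = C (n : R) * nodal univ d) (l : Fin (n - 1)) :
    ∑ k, ∏ j ∈ univ.erase k, (d l - c j) = 0 := by
  have := congrArg (eval (d l)) hcd
  rwa [derivative_nodal, eval_finsetSum, eval_mul, eval_nodal_at_node (mem_univ l), mul_zero,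
    Finset.sum_congr rfl fun k _ => eval_nodal] at this

lemma sum_powersetCard_prod_sub_eq_of_derivative_nodal
    (hcd : derivative (nodal univ c) = C (n : R) * nodal univ d) (i : Fin n) {s : ℕ}
    (hs : s < n) :
    ((n - s : ℕ) : R) * ∑ B ∈ (univ.erase i).powersetCard s, ∏ j ∈ B, (c i - c j) =
      n * ∑ B ∈ univ.powersetCard s, ∏ l ∈ B, (c i - d l) := by
  have hshift : ∀ {m : ℕ} (e : Fin m → R),
      (nodal univ e).comp (X + C (c i)) = ∏ j, (X + C (c i - e j)) := by
    intro m e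
    simp only [nodal_eq, Polynomial.prod_comp, sub_comp, X_comp, C_comp, C_sub, add_sub_assoc]
  have hsplit :
      X * ∏ j ∈ univ.erase i, (X + C (c i - c j)) = (nodal univ c).comp (X + C (c i)) := by
    rw [hshift, ← mul_prod_erase univ _ (mem_univ i), sub_self, C_0, add_zero]
  have hderiv : derivative (X * ∏ j ∈ univ.erase i, (X + C (c i - c j))) =
      C (n : R) * ∏ l, (X + C (c i - d l)) := by
    rw [hsplit, derivative_comp, hcd, mul_comp, C_comp, hshift, derivative_add, derivative_X,
      derivative_C, add_zero, one_mul]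
  have := congrArg (coeff · (n - 1 - s)) hderiv
  simp only [coeff_derivative, coeff_X_mul, coeff_C_mul] at this
  rw [prod_X_add_C_coeff _ _ (by simp), prod_X_add_C_coeff _ _ (by simp)] at this
  have hcard : #(univ.erase i) - (n - 1 - s) = s := by simp; omega
  have hcast : ((n - 1 - s : ℕ) : R) + 1 = (n - s : ℕ) := by
    rw [← Nat.cast_succ]; congr 1; omega
  rwa [hcard, card_univ, Fintype.card_fin, Nat.sub_sub_self (by omega : s ≤ n - 1), hcast,
    mul_comm] at this

end nodal

section criticalRoots

variable {n : ℕ} {β : Fin n → ℂ → ℂ} {γ : Fin (n - 1) → ℂ → ℂ}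

def HasCriticalRoots (β : Fin n → ℂ → ℂ) (γ : Fin (n - 1) → ℂ → ℂ) : Prop :=
  ∀ᶠ t in cobounded ℂ, derivative (nodal univ (β · t)) = C (n : ℂ) * nodal univ (γ · t)

lemma sum_ordInf_root_sub_eq (hβ : ∀ i, MeroInf (β i)) (hγ : ∀ l, MeroInf (γ l))
    (h : HasCriticalRoots β γ) (i : Fin n) :
    ∑ j ∈ univ.erase i, ordInf (fun t => β i t - β j t) =
      ∑ l, ordInf (fun t => β i t - γ l t) := by
  have hn : (n : ℂ) ≠ 0 := Nat.cast_ne_zero.mpr i.pos.ne'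
  rw [← ordInf_prod fun j _ => (hβ i).sub (hβ j), ← ordInf_prod fun l _ => (hβ i).sub (hγ l),
    ← ordInf_const_mul hn (MeroInf.prod fun l _ => (hβ i).sub (hγ l))]
  exact ordInf_congr (h.mono fun t ht => prod_erase_sub_eq_of_derivative_nodal ht i)

lemma exists_ordInf_sub_critical_le (hβ : ∀ i, MeroInf (β i)) (hγ : ∀ l, MeroInf (γ l))
    (h : HasCriticalRoots β γ) (l : Fin (n - 1)) (i : Fin n) :
    ∃ j ∈ univ.erase i, ordInf (fun t => β i t - γ l t) ≤ ordInf (fun t => β i t - β j t) := by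
  set e : Fin n → WithTop ℤ := fun k => ordInf fun t => β k t - γ l t
  suffices ∃ j ∈ univ.erase i, e i ≤ e j by
    obtain ⟨j, hj, hij⟩ := this
    have := min_ordInf_sub_le (hβ i) (hγ l) (hβ j)
    rw [ordInf_sub_comm (φ := γ l), min_eq_left hij] at this
    exact ⟨j, hj, this⟩
  by_contra! hlt
  have hF : ∀ k ∈ univ, MeroInf fun t => ∏ j ∈ univ.erase k, (γ l t - β j t) :=
    fun k _ => MeroInf.prod fun j _ => (hγ l).sub (hβ j)
  have hord : ∀ k, (ordInf fun t => ∏ j ∈ univ.erase k, (γ l t - β j t)) =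
      ∑ j ∈ univ.erase k, e j := fun k => by
    rw [ordInf_prod fun j _ => (hγ l).sub (hβ j)]
    exact sum_congr rfl fun j _ => ordInf_sub_comm
  have hfin : ∑ j ∈ univ.erase i, e j ≠ ⊤ :=
    WithTop.sum_ne_top.mpr fun j hj => (hlt j hj).ne_top
  -- the sum over `k` vanishes identically, yet its `k = i` term has strictly least order
  refine hfin ?_
  rw [← hord, ← ordInf_sum_of_lt hF (mem_univ i) (hord i ▸ hfin) ?_,
    ordInf_eq_top_of_eventually_eq_zero
      (h.mono fun t ht => sum_prod_erase_sub_eq_zero_of_derivative_nodal ht l)]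
  intro k _ hk
  have hki : k ∈ univ.erase i := mem_erase.mpr ⟨hk, mem_univ k⟩
  have hik : i ∈ univ.erase k := mem_erase.mpr ⟨hk.symm, mem_univ i⟩
  have hrest : ∑ j ∈ (univ.erase k).erase i, e j ≠ ⊤ := WithTop.sum_ne_top.mpr fun j hj =>
    (hlt j (mem_erase.mpr ⟨ne_of_mem_erase hj, mem_univ j⟩)).ne_top
  rw [hord, hord, ← add_sum_erase _ _ hki, ← add_sum_erase _ _ hik, erase_right_comm]
  exact WithTop.add_lt_add_right hrest (hlt k hki)

lemma exists_le_ordInf_sub_critical_of_eq_coe (hβ : ∀ i, MeroInf (β i))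
    (hγ : ∀ l, MeroInf (γ l)) (h : HasCriticalRoots β γ) {i : Fin n} {m : ℤ} {b : Fin n → ℤ}
    {a : Fin (n - 1) → ℤ} (hb : ∀ j ∈ univ.erase i, ordInf (fun t => β i t - β j t) = b j)
    (ha : ∀ l, ordInf (fun t => β i t - γ l t) = a l) (hbm : ∀ j ∈ univ.erase i, b j ≤ m)
    (hA : #{j ∈ univ.erase i | b j < m} < n - 1) :
    ∃ l, m ≤ a l := by
  by_contra! ham
  set A := {j ∈ univ.erase i | b j < m}
  have hsum : ∑ j ∈ univ.erase i, b j = ∑ l, a l := by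
    rw [← WithTop.coe_inj, WithTop.coe_sum, WithTop.coe_sum, ← sum_congr rfl hb,
      sum_ordInf_root_sub_eq hβ hγ h i]
    exact sum_congr rfl fun l _ => ha l
  have hW : ∀ C ∈ univ.powersetCard #A, ∑ j ∈ A, b j < ∑ l ∈ C, a l := fun C hC =>
    sum_filter_lt_lt_sum_of_sum_eq hbm (fun l _ => ham l) hsum (by simp) (subset_univ C)
      (mem_powersetCard.mp hC).2 (by simpa [(mem_powersetCard.mp hC).2] using hA)
  have hδ := ordInf_sum_powersetCard_prod_eq (fun j _ => (hβ i).sub (hβ j)) hb hbm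
  have hε := lt_ordInf_sum_powersetCard_prod (fun l _ => (hβ i).sub (hγ l)) (fun l _ => ha l) hW
  -- the `#A`-th elementary symmetric functions of the `βᵢ - βⱼ` and of the `βᵢ - γ_l` agree
  -- up to a nonzero factor, but have different orders
  have hn : (n : ℂ) ≠ 0 := Nat.cast_ne_zero.mpr i.pos.ne'
  have hnA : ((n - #A : ℕ) : ℂ) ≠ 0 := Nat.cast_ne_zero.mpr (by omega)
  refine hε.ne (hδ ▸ ?_)
  rw [← ordInf_const_mul hnA (MeroInf.sum fun B _ => MeroInf.prod fun j _ => (hβ i).sub (hβ j)),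
    ← ordInf_const_mul hn (MeroInf.sum fun C _ => MeroInf.prod fun l _ => (hβ i).sub (hγ l))]
  exact ordInf_congr (h.mono fun t ht =>
    sum_powersetCard_prod_sub_eq_of_derivative_nodal ht i (by omega))

lemma exists_le_ordInf_sub_critical (hβ : ∀ i, MeroInf (β i)) (hγ : ∀ l, MeroInf (γ l))
    (h : HasCriticalRoots β γ) {i j₀ : Fin n} (hj₀ : j₀ ∈ univ.erase i)
    (hmax : ∀ j ∈ univ.erase i,
      ordInf (fun t => β i t - β j t) ≤ ordInf (fun t => β i t - β j₀ t)) :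
    ∃ l, ordInf (fun t => β i t - β j₀ t) ≤ ordInf (fun t => β i t - γ l t) := by
  by_contra! hlt
  have hfin : ordInf (fun t => β i t - β j₀ t) ≠ ⊤ := fun htop => by
    have := sum_ordInf_root_sub_eq hβ hγ h i
    obtain ⟨l, -, hl⟩ := WithTop.sum_eq_top.mp (this ▸ WithTop.sum_eq_top.mpr ⟨j₀, hj₀, htop⟩)
    exact (hlt l).ne_top hl
  obtain ⟨m, hm⟩ := WithTop.ne_top_iff_exists.mp hfin
  have hlift : ∀ j, ∃ v : ℤ, j ∈ univ.erase i → ordInf (fun t => β i t - β j t) = v := by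
    intro j
    by_cases hj : j ∈ univ.erase i
    · obtain ⟨v, hv⟩ := WithTop.ne_top_iff_exists.mp
        ((hmax j hj).trans_lt (hm ▸ WithTop.coe_lt_top m)).ne
      exact ⟨v, fun _ => hv.symm⟩
    · exact ⟨0, fun h' => absurd h' hj⟩
  choose b hb using hlift
  choose a ha using fun l => WithTop.ne_top_iff_exists.mp (hlt l).ne_top
  have hbm : ∀ j ∈ univ.erase i, b j ≤ m := fun j hj => by
    rw [← WithTop.coe_le_coe, ← hb j hj, hm]; exact hmax j hj
  have hA : #{j ∈ univ.erase i | b j < m} < n - 1 := by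
    have hj₀A : j₀ ∉ {j ∈ univ.erase i | b j < m} := fun hj =>
      (mem_filter.mp hj).2.ne (WithTop.coe_inj.mp ((hb j₀ hj₀).symm.trans hm.symm))
    simpa using card_lt_card ((ssubset_iff_of_subset (filter_subset _ _)).mpr ⟨j₀, hj₀, hj₀A⟩)
  obtain ⟨l, hl⟩ := exists_le_ordInf_sub_critical_of_eq_coe hβ hγ h hb (fun l => (ha l).symm) hbm hA
  exact (hlt l).not_ge (by rw [← hm, ← ha l]; exact WithTop.coe_le_coe.mpr hl)

lemma exists_sum_ordInf_sub_critical_le (hβ : ∀ i, MeroInf (β i)) (hγ : ∀ l, MeroInf (γ l))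
    (h : HasCriticalRoots β γ) (l : Fin (n - 1)) :
    ∃ i, ∃ j₀ ∈ univ.erase i, ∑ k, ordInf (fun t => β k t - γ l t) ≤
      ∑ j ∈ univ.erase i, ordInf (fun t => β i t - β j t) + ordInf (fun t => β i t - β j₀ t) := by
  have : Nonempty (Fin n) := ⟨⟨0, by have := l.pos; omega⟩⟩
  obtain ⟨i, -, hi⟩ :=
    exists_max_image univ (fun k => ordInf fun t => β k t - γ l t) univ_nonempty
  obtain ⟨j₀, hj₀, hle⟩ := exists_ordInf_sub_critical_le hβ hγ h l i
  refine ⟨i, j₀, hj₀, ?_⟩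
  rw [← sum_erase_add _ _ (mem_univ i)]
  refine add_le_add (sum_le_sum fun j _ => ?_) hle
  have := min_ordInf_sub_le (hβ i) (hγ l) (hβ j)
  rwa [ordInf_sub_comm (φ := γ l), min_eq_right (hi j (mem_univ j))] at this

lemma exists_le_sum_ordInf_sub_critical (hβ : ∀ i, MeroInf (β i)) (hγ : ∀ l, MeroInf (γ l))
    (h : HasCriticalRoots β γ) {i j₀ : Fin n} (hj₀ : j₀ ∈ univ.erase i)
    (hmax : ∀ j ∈ univ.erase i,
      ordInf (fun t => β i t - β j t) ≤ ordInf (fun t => β i t - β j₀ t)) :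
    ∃ l, ∑ j ∈ univ.erase i, ordInf (fun t => β i t - β j t) + ordInf (fun t => β i t - β j₀ t) ≤
      ∑ k, ordInf (fun t => β k t - γ l t) := by
  obtain ⟨l, hl⟩ := exists_le_ordInf_sub_critical hβ hγ h hj₀ hmax
  refine ⟨l, ?_⟩
  rw [← sum_erase_add _ _ (mem_univ i)]
  refine add_le_add (sum_le_sum fun j hj => ?_) hl
  have := min_ordInf_sub_le (hβ j) (hβ i) (hγ l)
  rwa [ordInf_sub_comm (φ := β j), min_eq_left ((hmax j hj).trans hl)] at this

end criticalRoots

lemma degInf_comp_eq_degOfOrd_sum {ι : Type*} [Fintype ι] {F : ℂ → ℂ → ℂ} {β : ι → ℂ → ℂ}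
    {φ : ℂ → ℂ} (hβ : ∀ i, MeroInf (β i)) (hφ : MeroInf φ)
    (hF : ∀ᶠ t in cobounded ℂ, ∀ y, F t y = ∏ i, (y - β i t)) :
    degInf (fun t => F t (φ t)) = degOfOrd (∑ i, ordInf fun t => β i t - φ t) := by
  have hev : (fun t => ∏ i, (φ t - β i t)) =ᶠ[cobounded ℂ] fun t => F t (φ t) :=
    hF.mono fun t ht => (ht (φ t)).symm
  have hprod := MeroInf.prod (s := univ) fun i _ => hφ.sub (hβ i)
  rw [degInf_eq_degOfOrd (hprod.congr hev), ← ordInf_congr hev,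
    ordInf_prod fun i _ => hφ.sub (hβ i)]
  exact congrArg degOfOrd (sum_congr rfl fun i _ => ordInf_sub_comm)

lemma derivative_nodal_eq_of_pval {f : Polynomial (Polynomial ℂ)} {x lam0 : ℂ} {n : ℕ}
    {b : Fin n → ℂ} {g : Fin (n - 1) → ℂ} (hb : ∀ y, pval f x y - lam0 = ∏ i, (y - b i))
    (hg : ∀ y, pval (derivative f) x y = n * ∏ l, (y - g l)) :
    derivative (nodal univ b) = C (n : ℂ) * nodal univ g := by
  have hf : f.map (evalRingHom x) = nodal univ b + C lam0 :=
    Polynomial.funext fun y => by simp [eval_nodal, ← hb y, pval]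
  have hf' : (derivative f).map (evalRingHom x) = C (n : ℂ) * nodal univ g :=
    Polynomial.funext fun y => by simp [eval_nodal, ← hg y, pval]
  rw [← hf', ← derivative_map, hf, derivative_add, derivative_C, add_zero]

theorem stmt1_general (f : Polynomial (Polynomial ℂ))
    (n : ℕ) (hn1 : 1 < n) (lam0 : ℂ)
    (D : ℕ) (β : Fin n → ℂ → ℂ) (γ : Fin (n - 1) → ℂ → ℂ)
    (hβm : ∀ i, MeroInf (β i)) (hγm : ∀ j, MeroInf (γ j))
    (hβ : ∃ R : ℝ, 0 < R ∧ ∀ t : ℂ, R < ‖t‖ → ∀ y : ℂ,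
      pval f (t ^ D) y - lam0 = ∏ i, (y - β i t))
    (hγ : ∃ R : ℝ, 0 < R ∧ ∀ t : ℂ, R < ‖t‖ → ∀ y : ℂ,
      pval (derivative f) (t ^ D) y = (n : ℂ) * ∏ j, (y - γ j t)) :
    (⨅ i : Fin n,
        ((∑ j ∈ Finset.univ.erase i, degInf fun t => β i t - β j t) +
          ⨅ j ∈ Finset.univ.erase i, degInf fun t => β i t - β j t)) =
      ⨅ l : Fin (n - 1), degInf fun t => pval f (t ^ D) (γ l t) - lam0 := by
  have hfar : ∀ {P : ℂ → Prop}, (∃ R : ℝ, 0 < R ∧ ∀ t : ℂ, R < ‖t‖ → P t) →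
      ∀ᶠ t in cobounded ℂ, P t := fun ⟨R, _, hR⟩ =>
    (tendsto_norm_cobounded_atTop.eventually_gt_atTop R).mono hR
  have hcrit : HasCriticalRoots β γ := ((hfar hβ).and (hfar hγ)).mono fun t ht =>
    derivative_nodal_eq_of_pval ht.1 ht.2
  simp only [degInf_comp_eq_degOfOrd_sum hβm (hγm _) (hfar hβ),
    fun i j => degInf_eq_degOfOrd ((hβm i).sub (hβm j))]
  refine le_antisymm (iInf_mono' fun l => ?_) (iInf_mono' fun i => ?_)
  · obtain ⟨i, j₀, hj₀, hle⟩ := exists_sum_ordInf_sub_critical_le hβm hγm hcrit l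
    refine ⟨i, (add_le_add le_rfl (iInf₂_le j₀ hj₀)).trans ?_⟩
    rw [← map_sum, ← map_add]
    exact degOfOrd_antitone hle
  · obtain ⟨j₀, hj₀, hmax⟩ := exists_max_image (univ.erase i)
      (fun j => ordInf fun t => β i t - β j t) (by simp [← card_pos]; omega)
    obtain ⟨l, hle⟩ := exists_le_sum_ordInf_sub_critical hβm hγm hcrit hj₀ hmax
    refine ⟨l, (degOfOrd_antitone hle).trans ?_⟩
    rw [map_add, map_sum]
    exact add_le_add le_rfl (le_iInf₂ fun j hj => degOfOrd_antitone (hmax j hj))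

/-- Proposition 2.2. -/
theorem stmt1 (f : Polynomial (Polynomial ℂ)) (hf : NormalForm f)
    (n : ℕ) (hn : n = f.natDegree) (hn1 : 1 < n) (lam0 : ℂ)
    (D : ℕ) (hD : 1 ≤ D) (β : Fin n → ℂ → ℂ) (γ : Fin (n - 1) → ℂ → ℂ)
    (hβm : ∀ i, MeroInf (β i)) (hγm : ∀ j, MeroInf (γ j))
    (hβd : ∀ i, degInf (β i) ≤ ((D : ℝ) : EReal))
    (hγd : ∀ j, degInf (γ j) ≤ ((D : ℝ) : EReal))
    (hβ : ∃ R : ℝ, 0 < R ∧ ∀ t : ℂ, R < ‖t‖ → ∀ y : ℂ,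
      pval f (t ^ D) y - lam0 = ∏ i, (y - β i t))
    (hγ : ∃ R : ℝ, 0 < R ∧ ∀ t : ℂ, R < ‖t‖ → ∀ y : ℂ,
      pval (derivative f) (t ^ D) y = (n : ℂ) * ∏ j, (y - γ j t)) :
    (⨅ i : Fin n,
        ((∑ j ∈ Finset.univ.erase i, degInf fun t => β i t - β j t) +
          ⨅ j ∈ Finset.univ.erase i, degInf fun t => β i t - β j t)) =
      ⨅ l : Fin (n - 1), degInf fun t => pval f (t ^ D) (γ l t) - lam0 :=
  stmt1_general f n hn1 lam0 D β γ hβm hγm hβ hγ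

end
end

section
/- Let f ∈ ℂ[x,y] be in normal form with deg f > 1 and let λ₀ ∈ ℂ. If 𝓛∞((f−λ₀, f'_y)) < 0, where (f−λ₀, f'_y) : ℂ² → ℂ² is the polynomial map z ↦ (f(z)−λ₀, f'_y(z)), then: (i) 𝓛∞((f−λ₀, f'_y)) = 𝓛∞(f−λ₀ | S_y); (ii) λ₀ ∈ Λ(f). Moreover, if additionally 𝓛∞((f−λ₀, f'_y)) ≠ −∞, then 𝓛∞(f−λ₀ | S_y) < 𝓛∞(f'_y | S_{λ₀}). -/
open Polynomial

noncomputable section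
open scoped Classical

/-! For fixed `x`, `p = f(x, ·)` is monic of degree `n ≥ 2`, and moving `y` to a nearest root `y'`
of `p'` costs `|y - y'| ≤ |p'(y)| ^ (1/(n-1))` while changing `p` by at most
`2 ^ (n-1) |p'(y)| |y - y'|`: along the segment from `y` to `y'` every linear factor of `p'` at most
doubles. So a point where `(f - λ₀, f'_y)` is small lies within distance `1` of a point of `S_y`
where `f - λ₀` is small, which gives (i); on the fibre `f = λ₀` the same projection bounds
`|f - λ₀|` on `S_y` by `|f'_y| ^ (n/(n-1))`, which gives the strict inequality. For (ii), the
projections of points at infinity where `(f - λ₀, f'_y)` is small are critical points `(x, y')`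
with `f(x, y') → λ₀`; they are roots in `x` of `Res_y(f - f(x, y'), f'_y)`, and `|x| → ∞` because
the roots of `f'_y(x, ·)` stay bounded for bounded `x`. By Cauchy's bound on roots this is
impossible unless the leading coefficient of the resultant vanishes at `λ₀`. -/

namespace Polynomial

theorem norm_eval_eq_mul_prod_roots (q : ℂ[X]) (t : ℂ) :
    ‖q.eval t‖ = ‖q.leadingCoeff‖ * (q.roots.map fun r => ‖t - r‖).prod := by
  have hcard := splits_iff_card_roots.mp (IsAlgClosed.splits q)
  conv_lhs => rw [← C_leadingCoeff_mul_prod_multiset_X_sub_C hcard]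
  rw [eval_mul, eval_C, eval_multiset_prod, norm_mul, Multiset.map_map]
  congr 1
  exact (map_multiset_prod (normHom (α := ℂ)) _).trans (by simp [Multiset.map_map])

theorem exists_isRoot_forall_norm_sub_le {q : ℂ[X]} (hq : q.natDegree ≠ 0) (y : ℂ) :
    ∃ y', q.IsRoot y' ∧ ∀ r ∈ q.roots, ‖y - y'‖ ≤ ‖y - r‖ := by
  have hcard := splits_iff_card_roots.mp (IsAlgClosed.splits q)
  obtain ⟨r₀, hr₀⟩ : ∃ r, r ∈ q.roots :=
    Multiset.card_pos_iff_exists_mem.mp (by omega)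
  obtain ⟨y', hy', hmin⟩ := q.roots.toFinset.exists_min_image (fun r => ‖y - r‖)
    ⟨r₀, Multiset.mem_toFinset.mpr hr₀⟩
  exact ⟨y', (mem_roots'.mp (Multiset.mem_toFinset.mp hy')).2,
    fun r hr => hmin r (Multiset.mem_toFinset.mpr hr)⟩

theorem norm_eval_le_of_norm_sub_le_nearest_root {q : ℂ[X]} {y y' t : ℂ}
    (hmin : ∀ r ∈ q.roots, ‖y - y'‖ ≤ ‖y - r‖) (ht : ‖t - y‖ ≤ ‖y - y'‖) :
    ‖q.eval t‖ ≤ 2 ^ q.natDegree * ‖q.eval y‖ := by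
  have hcard := splits_iff_card_roots.mp (IsAlgClosed.splits q)
  have hfactor : (q.roots.map fun r => ‖t - r‖).prod ≤ 2 ^ q.natDegree *
      (q.roots.map fun r => ‖y - r‖).prod := by
    rw [← hcard, ← Multiset.prod_replicate, ← Multiset.map_const', ← Multiset.prod_map_mul]
    refine Multiset.prod_map_le_prod_map₀ _ _ (fun _ _ => norm_nonneg _) fun r hr => ?_
    calc ‖t - r‖ ≤ ‖t - y‖ + ‖y - r‖ := norm_sub_le_norm_sub_add_norm_sub t y r
      _ ≤ 2 * ‖y - r‖ := by linarith [hmin r hr]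
  rw [norm_eval_eq_mul_prod_roots, norm_eval_eq_mul_prod_roots, mul_left_comm]
  exact mul_le_mul_of_nonneg_left hfactor (norm_nonneg _)

theorem norm_eval_sub_le_of_nearest_root_derivative {p : ℂ[X]} {y y' : ℂ}
    (hmin : ∀ r ∈ (derivative p).roots, ‖y - y'‖ ≤ ‖y - r‖) :
    ‖p.eval y - p.eval y'‖ ≤
      2 ^ (p.natDegree - 1) * ‖(derivative p).eval y‖ * ‖y - y'‖ := by
  have hbound : ∀ t ∈ segment ℝ y y',
      ‖(derivative p).eval t‖ ≤ 2 ^ (p.natDegree - 1) * ‖(derivative p).eval y‖ := by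
    intro t ht
    rw [← natDegree_derivative]
    refine norm_eval_le_of_norm_sub_le_nearest_root hmin ?_
    rw [norm_sub_rev y]
    exact norm_sub_le_of_mem_segment ht
  exact (convex_segment y y').norm_image_sub_le_of_norm_hasDerivWithin_le
    (fun t _ => (p.hasDerivAt t).hasDerivWithinAt) hbound
    (right_mem_segment ℝ y y') (left_mem_segment ℝ y y')

theorem Monic.exists_isRoot_derivative_near {p : ℂ[X]} (hp : p.Monic)
    (hn : 1 < p.natDegree) (y : ℂ) :
    ∃ y', (derivative p).IsRoot y' ∧
      ‖y - y'‖ ^ (p.natDegree - 1) ≤ ‖(derivative p).eval y‖ ∧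
      ‖p.eval y - p.eval y'‖ ≤
        2 ^ (p.natDegree - 1) * ‖(derivative p).eval y‖ * ‖y - y'‖ := by
  have hdeg : (derivative p).natDegree = p.natDegree - 1 := natDegree_derivative p
  obtain ⟨y', hroot, hmin⟩ := exists_isRoot_forall_norm_sub_le (q := derivative p) (by omega) y
  refine ⟨y', hroot, ?_, norm_eval_sub_le_of_nearest_root_derivative hmin⟩
  have hcard := splits_iff_card_roots.mp (IsAlgClosed.splits (derivative p))
  have hlc : 1 ≤ ‖(derivative p).leadingCoeff‖ := by
    rw [leadingCoeff_derivative, hp.leadingCoeff, one_mul, Complex.norm_natCast]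
    exact_mod_cast (zero_lt_one.trans hn)
  calc ‖y - y'‖ ^ (p.natDegree - 1)
      = ((derivative p).roots.map fun _ => ‖y - y'‖).prod := by
        rw [Multiset.map_const', Multiset.prod_replicate, hcard, hdeg]
    _ ≤ ((derivative p).roots.map fun r => ‖y - r‖).prod :=
        Multiset.prod_map_le_prod_map₀ _ _ (fun _ _ => norm_nonneg _) hmin
    _ ≤ ‖(derivative p).leadingCoeff‖ * ((derivative p).roots.map fun r => ‖y - r‖).prod :=
        le_mul_of_one_le_left (Multiset.prod_nonneg fun _ h => by
          obtain ⟨r, -, rfl⟩ := Multiset.mem_map.mp h; exact norm_nonneg _) hlc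
    _ = ‖(derivative p).eval y‖ := (norm_eval_eq_mul_prod_roots _ y).symm

theorem cauchyBound_le_sum_div (p : ℂ[X]) :
    (cauchyBound p : ℝ) ≤
      (∑ i ∈ Finset.range p.natDegree, ‖p.coeff i‖) / ‖p.leadingCoeff‖ + 1 := by
  have hsup : (Finset.range p.natDegree).sup (‖p.coeff ·‖₊) ≤
      ∑ i ∈ Finset.range p.natDegree, ‖p.coeff i‖₊ :=
    Finset.sup_le fun i hi => Finset.single_le_sum (f := (‖p.coeff ·‖₊)) (fun _ _ => zero_le) hi
  rw [cauchyBound, NNReal.coe_add, NNReal.coe_div, NNReal.coe_one, coe_nnnorm]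
  gcongr
  simpa only [← NNReal.coe_le_coe, NNReal.coe_sum, coe_nnnorm] using hsup

theorem exists_norm_le_of_isRoot_map_evalRingHom (P : ℂ[X][X]) {K : Set ℂ} (hK : IsCompact K)
    (hlc : ∀ μ ∈ K, P.leadingCoeff.eval μ ≠ 0) :
    ∃ B : ℝ, ∀ μ ∈ K, ∀ x, (P.map (evalRingHom μ)).IsRoot x → ‖x‖ ≤ B := by
  set g : ℂ → ℝ := fun μ =>
    (∑ i ∈ Finset.range P.natDegree, ‖(P.coeff i).eval μ‖) / ‖P.leadingCoeff.eval μ‖ + 1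
  have hg : ContinuousOn g K :=
    ((continuous_finsetSum _ fun i _ => (P.coeff i).continuous.norm).continuousOn.div
      P.leadingCoeff.continuous.norm.continuousOn
      fun μ hμ => norm_ne_zero_iff.mpr (hlc μ hμ)).add continuousOn_const
  obtain ⟨B, hB⟩ := hK.exists_bound_of_continuousOn hg
  refine ⟨B, fun μ hμ x hx => ?_⟩
  have hlcμ : (evalRingHom μ) P.leadingCoeff ≠ 0 := hlc μ hμ
  have hne : P.map (evalRingHom μ) ≠ 0 := by
    rw [← leadingCoeff_ne_zero, leadingCoeff_map_of_leadingCoeff_ne_zero _ hlcμ]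
    exact hlcμ
  have hcauchy := cauchyBound_le_sum_div (P.map (evalRingHom μ))
  rw [natDegree_map_of_leadingCoeff_ne_zero _ hlcμ,
    leadingCoeff_map_of_leadingCoeff_ne_zero _ hlcμ] at hcauchy
  simp only [coeff_map, coe_evalRingHom] at hcauchy
  calc ‖x‖ ≤ cauchyBound (P.map (evalRingHom μ)) := (hx.norm_lt_cauchyBound hne).le
    _ ≤ g μ := hcauchy
    _ ≤ B := (Real.le_norm_self _).trans (hB μ hμ)

end Polynomial

theorem sylvester_eq_transpose {R : Type*} [CommRing R] (p q : R[X]) :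
    _root_.sylvester p q p.natDegree q.natDegree =
      (Polynomial.sylvester q p q.natDegree p.natDegree).transpose := by
  ext i j
  induction i using Fin.addCases <;>
  · simp only [_root_.sylvester, Polynomial.sylvester, Matrix.transpose_apply, Matrix.of_apply,
      Fin.addCases_left, Fin.addCases_right, Set.mem_Icc]
    split_ifs <;> first | rfl | omega | exact coeff_eq_zero_of_natDegree_lt (by omega)

theorem resultant_eq_resultant_swap {R : Type*} [CommRing R] (p q : R[X]) :
    _root_.resultant p q = Polynomial.resultant q p := by
  rw [_root_.resultant, sylvester_eq_transpose, Matrix.det_transpose, Polynomial.resultant]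

theorem resultant_eq_zero_of_isRoot_map {R K : Type*} [CommRing R] [Field K] (φ : R →+* K)
    {p q : R[X]} (hp : (p.map φ).natDegree = p.natDegree)
    (hq : (q.map φ).natDegree = q.natDegree) (hp0 : p.map φ ≠ 0) {a : K}
    (hpa : (p.map φ).IsRoot a) (hqa : (q.map φ).IsRoot a) :
    φ (_root_.resultant p q) = 0 := by
  rw [resultant_eq_resultant_swap, ← resultant_map_map, ← hp, ← hq, resultant_eq_zero_iff]
  refine ⟨Or.inr hp0, fun ⟨u, v, huv⟩ => ?_⟩
  have := congrArg (eval a) huv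
  simp [hpa.eq_zero, hqa.eq_zero] at this

section LojasiewiczExponent

variable {E F G : Type*} [NormedAddCommGroup E] [NormedAddCommGroup F] [NormedAddCommGroup G]

/-- The set `N(f|S)` of the paper. -/
def lojExponents (f : E → F) (S : Set E) : Set ℝ :=
  {ν : ℝ | ∃ A B : ℝ, 0 < A ∧ 0 < B ∧ ∀ z ∈ S, B < ‖z‖ → A * ‖z‖ ^ ν ≤ ‖f z‖}

theorem lojInfOn_eq_sSup (f : E → F) (S : Set E) :
    lojInfOn f S = sSup (Real.toEReal '' lojExponents f S) := rfl

theorem coe_le_lojInfOn {f : E → F} {S : Set E} {ν : ℝ} (h : ν ∈ lojExponents f S) :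
    (ν : EReal) ≤ lojInfOn f S :=
  le_sSup ⟨ν, h, rfl⟩

theorem exists_mem_lojExponents_gt {f : E → F} {S : Set E} {c : ℝ}
    (h : (c : EReal) < lojInfOn f S) : ∃ ν ∈ lojExponents f S, c < ν := by
  obtain ⟨_, ⟨ν, hν, rfl⟩, hc⟩ := lt_sSup_iff.mp h
  exact ⟨ν, hν, EReal.coe_lt_coe_iff.mp hc⟩

theorem zero_notMem_lojExponents {f : E → F} {S : Set E} (h : lojInfOn f S < 0) :
    (0 : ℝ) ∉ lojExponents f S :=
  fun h0 => (coe_le_lojInfOn h0).not_gt h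

theorem mem_lojExponents_of_le {f : E → F} {S : Set E} {ν ν' : ℝ}
    (h : ν ∈ lojExponents f S) (hle : ν' ≤ ν) : ν' ∈ lojExponents f S := by
  obtain ⟨A, B, hA, hB, hAB⟩ := h
  refine ⟨A, max B 1, hA, by positivity, fun z hz hzB => ?_⟩
  have h1 : 1 ≤ ‖z‖ := (le_max_right B 1).trans hzB.le
  calc A * ‖z‖ ^ ν' ≤ A * ‖z‖ ^ ν := by gcongr
    _ ≤ ‖f z‖ := hAB z hz ((le_max_left B 1).trans_lt hzB)

theorem exists_norm_lt_of_zero_notMem_lojExponents {f : E → F} {S : Set E}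
    (h : (0 : ℝ) ∉ lojExponents f S) {ε : ℝ} (hε : 0 < ε) (B : ℝ) :
    ∃ z ∈ S, B < ‖z‖ ∧ ‖f z‖ < ε := by
  by_contra! hcon
  exact h ⟨ε, max B 1, hε, by positivity, fun z hz hzB => by
    simpa using hcon z hz ((le_max_left B 1).trans_lt hzB)⟩

theorem div_mem_lojExponents_of_near {f : E → F} {g : E → G} {S T : Set E} {ν k C : ℝ}
    (hν : ν ≤ 0) (hk : 0 < k) (hC : 0 < C) (hg : ν ∈ lojExponents g S)
    (hnear : ∀ z ∈ T, ‖f z‖ < 1 → ∃ w ∈ S, ‖z - w‖ ≤ 1 ∧ ‖g w‖ ≤ C * ‖f z‖ ^ k) :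
    ν / k ∈ lojExponents f T := by
  obtain ⟨A, B, hA, hB, hAB⟩ := hg
  set a := (A * 2 ^ ν / C) ^ k⁻¹
  refine ⟨min 1 a, B + 2, by positivity, by linarith, fun z hz hzB => ?_⟩
  have hz1 : 1 ≤ ‖z‖ := by linarith
  by_cases hfz : 1 ≤ ‖f z‖
  · calc min 1 a * ‖z‖ ^ (ν / k) ≤ 1 * 1 :=
          mul_le_mul (min_le_left _ _) (Real.rpow_le_one_of_one_le_of_nonpos hz1
            (div_nonpos_of_nonpos_of_nonneg hν hk.le)) (by positivity) zero_le_one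
      _ ≤ ‖f z‖ := by rwa [one_mul]
  obtain ⟨w, hwS, hzw, hgw⟩ := hnear z hz (not_le.mp hfz)
  have hwz : ‖w‖ ≤ 2 * ‖z‖ := by
    linarith [norm_sub_norm_le w z, norm_sub_rev w z]
  have hBw : B < ‖w‖ := by linarith [norm_sub_norm_le z w]
  have hkey : A * 2 ^ ν / C * ‖z‖ ^ ν ≤ ‖f z‖ ^ k := by
    rw [div_mul_eq_mul_div, div_le_iff₀ hC, mul_assoc, ← Real.mul_rpow zero_le_two (by positivity)]
    calc A * (2 * ‖z‖) ^ ν ≤ A * ‖w‖ ^ ν := by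
          gcongr ?_ * ?_
          exact Real.rpow_le_rpow_of_nonpos (hB.trans hBw) hwz hν
      _ ≤ ‖g w‖ := hAB w hwS hBw
      _ ≤ ‖f z‖ ^ k * C := by linarith
  calc min 1 a * ‖z‖ ^ (ν / k) ≤ a * ‖z‖ ^ (ν / k) := by gcongr; exact min_le_right _ _
    _ = (A * 2 ^ ν / C * ‖z‖ ^ ν) ^ k⁻¹ := by
        rw [Real.mul_rpow (by positivity) (by positivity), ← Real.rpow_mul (norm_nonneg z),
          div_eq_mul_inv]
    _ ≤ (‖f z‖ ^ k) ^ k⁻¹ := by gcongr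
    _ = ‖f z‖ := Real.rpow_rpow_inv (norm_nonneg _) hk.ne'

end LojasiewiczExponent

theorem pval_derivative (f : ℂ[X][X]) (x y : ℂ) :
    pval (derivative f) x y = (derivative (f.map (evalRingHom x))).eval y := by
  rw [pval, derivative_map]

section Plane

variable {f : ℂ[X][X]}

theorem exists_mem_Sy_near (hf : f.Monic) (hdeg : 1 < f.natDegree) (z : ℂ × ℂ)
    (hz : ‖pval (derivative f) z.1 z.2‖ ≤ 1) :
    ∃ w ∈ Sy f, ‖z - w‖ ≤ 1 ∧ ‖pval f w.1 w.2 - pval f z.1 z.2‖ ≤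
      2 ^ (f.natDegree - 1) *
        ‖pval (derivative f) z.1 z.2‖ ^ (1 + ((f.natDegree - 1 : ℕ) : ℝ)⁻¹) := by
  set p := f.map (evalRingHom z.1)
  have hp : p.natDegree = f.natDegree := hf.natDegree_map _
  obtain ⟨y', hroot, hpow, hmvt⟩ :=
    (hf.map (evalRingHom z.1)).exists_isRoot_derivative_near (hp ▸ hdeg) z.2
  rw [hp, ← pval_derivative] at hpow hmvt
  set m := f.natDegree - 1
  set q := ‖pval (derivative f) z.1 z.2‖
  have hm : m ≠ 0 := by omega
  have hdist : ‖z.2 - y'‖ ≤ q ^ (m⁻¹ : ℝ) := by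
    rw [← Real.pow_rpow_inv_natCast (norm_nonneg (z.2 - y')) hm]
    gcongr
  have hnorm : ‖z - (z.1, y')‖ = ‖z.2 - y'‖ := by simp [Prod.norm_def]
  refine ⟨(z.1, y'), (pval_derivative f z.1 y').trans hroot, ?_, ?_⟩
  · rw [hnorm]
    exact hdist.trans (Real.rpow_le_one (norm_nonneg _) hz (by positivity))
  · rw [norm_sub_rev, Real.rpow_add' (norm_nonneg _) (by positivity), Real.rpow_one,
      ← mul_assoc]
    exact hmvt.trans (by gcongr)

theorem exists_mem_Sy_near_of_norm_lt_one (hf : f.Monic) (hdeg : 1 < f.natDegree) (lam0 : ℂ)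
    (z : ℂ × ℂ)
    (hz : ‖((pval f z.1 z.2 - lam0, pval (derivative f) z.1 z.2) : ℂ × ℂ)‖ < 1) :
    ∃ w ∈ Sy f, ‖z - w‖ ≤ 1 ∧ ‖pval f w.1 w.2 - lam0‖ ≤
      (1 + 2 ^ (f.natDegree - 1)) *
        ‖((pval f z.1 z.2 - lam0, pval (derivative f) z.1 z.2) : ℂ × ℂ)‖ := by
  have hε₁ := norm_fst_le ((pval f z.1 z.2 - lam0, pval (derivative f) z.1 z.2) : ℂ × ℂ)
  have hε₂ := norm_snd_le ((pval f z.1 z.2 - lam0, pval (derivative f) z.1 z.2) : ℂ × ℂ)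
  set ε := ‖((pval f z.1 z.2 - lam0, pval (derivative f) z.1 z.2) : ℂ × ℂ)‖
  obtain ⟨w, hw, hzw, hfw⟩ := exists_mem_Sy_near hf hdeg z (by linarith)
  have hpow : ‖pval (derivative f) z.1 z.2‖ ^ (1 + ((f.natDegree - 1 : ℕ) : ℝ)⁻¹) ≤ ε :=
    calc _ ≤ ‖pval (derivative f) z.1 z.2‖ ^ (1 : ℝ) :=
          Real.rpow_le_rpow_of_exponent_ge' (norm_nonneg _) (by linarith) zero_le_one
            (by simp)
      _ ≤ ε := by rwa [Real.rpow_one]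
  refine ⟨w, hw, hzw, ?_⟩
  calc ‖pval f w.1 w.2 - lam0‖
      ≤ ‖pval f w.1 w.2 - pval f z.1 z.2‖ + ‖pval f z.1 z.2 - lam0‖ :=
        norm_sub_le_norm_sub_add_norm_sub _ _ _
    _ ≤ 2 ^ (f.natDegree - 1) * ε + ε := by gcongr; exact hfw.trans (by gcongr)
    _ = (1 + 2 ^ (f.natDegree - 1)) * ε := by ring

theorem eval_map_Rres_eq_zero (hf : f.Monic) (hdeg : 1 < f.natDegree) {x y : ℂ}
    (hy : pval (derivative f) x y = 0) :
    ((Rres f).map (evalRingHom (pval f x y))).eval x = 0 := by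
  set μ := pval f x y
  set ev : ℂ[X][X] →+* ℂ := (evalRingHom x).comp (mapRingHom (evalRingHom μ))
  set F : ℂ[X][X][X] := f.map (mapRingHom C)
  set p := f.map (evalRingHom x)
  have hcomp : ev.comp (mapRingHom C) = evalRingHom x := by
    ext <;> simp [ev]
  have hF : F.map ev = p := by rw [Polynomial.map_map, hcomp]
  have hFdeg : F.natDegree = f.natDegree := hf.natDegree_map _
  have hpdeg : p.natDegree = f.natDegree := hf.natDegree_map _
  have hfib : (F - C (C X)).map ev = p - C μ := by
    rw [Polynomial.map_sub, hF, Polynomial.map_C]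
    simp [ev]
  have hcrit : (derivative F).map ev = derivative p := by rw [← derivative_map, hF]
  exact resultant_eq_zero_of_isRoot_map ev
    (by rw [hfib, natDegree_sub_C, natDegree_sub_C, hpdeg, hFdeg])
    (by rw [hcrit, natDegree_derivative, natDegree_derivative, hpdeg, hFdeg])
    (by rw [hfib]; exact ne_zero_of_natDegree_gt (n := 0) (by rw [natDegree_sub_C]; omega))
    (a := y) (by rw [hfib]; simp [p, μ, pval])
    (by rw [hcrit]; exact (pval_derivative f x y).symm.trans hy)

theorem exists_norm_snd_le_of_mem_Sy (hf : f.Monic) (hdeg : 1 < f.natDegree) (L : ℝ) :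
    ∃ B : ℝ, ∀ w ∈ Sy f, ‖w.1‖ ≤ L → ‖w.2‖ ≤ B := by
  have hlc : ∀ μ ∈ Metric.closedBall (0 : ℂ) L, (derivative f).leadingCoeff.eval μ ≠ 0 := by
    intro μ _
    rw [leadingCoeff_derivative, hf.leadingCoeff, one_mul, eval_natCast, Nat.cast_ne_zero]
    omega
  obtain ⟨B, hB⟩ := exists_norm_le_of_isRoot_map_evalRingHom _ (isCompact_closedBall 0 L) hlc
  exact ⟨B, fun w hw hwL => hB w.1 (by simpa using hwL) w.2 hw⟩

theorem lojExponents_pair_eq (hf : f.Monic) (hdeg : 1 < f.natDegree) (lam0 : ℂ)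
    (h0 : (0 : ℝ) ∉ lojExponents
      (fun z : ℂ × ℂ => (pval f z.1 z.2 - lam0, pval (derivative f) z.1 z.2)) Set.univ) :
    lojExponents (fun z : ℂ × ℂ => (pval f z.1 z.2 - lam0, pval (derivative f) z.1 z.2))
        Set.univ =
      lojExponents (fun z : ℂ × ℂ => pval f z.1 z.2 - lam0) (Sy f) := by
  have hle : ∀ ν ≤ 0, ν ∈ lojExponents (fun z : ℂ × ℂ => pval f z.1 z.2 - lam0) (Sy f) →
      ν ∈ lojExponents (fun z : ℂ × ℂ => (pval f z.1 z.2 - lam0, pval (derivative f) z.1 z.2))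
        Set.univ := fun ν hν h => by
    simpa only [div_one] using div_mem_lojExponents_of_near (C := 1 + 2 ^ (f.natDegree - 1))
      hν one_pos (by positivity) h fun z _ hz => by
        simpa only [Real.rpow_one] using exists_mem_Sy_near_of_norm_lt_one hf hdeg lam0 z hz
  ext ν
  constructor
  · rintro ⟨A, B, hA, hB, hAB⟩
    refine ⟨A, B, hA, hB, fun z hz hzB => ?_⟩
    simpa [Prod.norm_def, show pval (derivative f) z.1 z.2 = 0 from hz] using
      hAB z trivial hzB
  · intro hν
    rcases le_or_gt ν 0 with hν0 | hν0
    · exact hle ν hν0 hν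
    · exact absurd (hle 0 le_rfl (mem_lojExponents_of_le hν hν0.le)) h0

theorem mem_LambdaSet_of_zero_notMem (hf : f.Monic) (hdeg : 1 < f.natDegree) (lam0 : ℂ)
    (h0 : (0 : ℝ) ∉ lojExponents
      (fun z : ℂ × ℂ => (pval f z.1 z.2 - lam0, pval (derivative f) z.1 z.2)) Set.univ) :
    lam0 ∈ LambdaSet f := by
  by_contra hlc
  obtain ⟨δ, hδ, hball⟩ := Metric.nhds_basis_closedBall.eventually_iff.mp
    ((Rres f).leadingCoeff.continuous.continuousAt.eventually_ne hlc)
  obtain ⟨Bx, hBx⟩ :=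
    exists_norm_le_of_isRoot_map_evalRingHom (Rres f) (isCompact_closedBall lam0 δ) hball
  obtain ⟨By, hBy⟩ := exists_norm_snd_le_of_mem_Sy hf hdeg Bx
  set C : ℝ := 1 + 2 ^ (f.natDegree - 1)
  have hC : 0 < C := by positivity
  obtain ⟨z, -, hzB, hz⟩ := exists_norm_lt_of_zero_notMem_lojExponents h0
    (ε := min 1 (δ / C)) (by positivity) (max Bx By + 1)
  obtain ⟨w, hw, hzw, hfw⟩ :=
    exists_mem_Sy_near_of_norm_lt_one hf hdeg lam0 z (hz.trans_le (min_le_left _ _))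
  have hμ : pval f w.1 w.2 ∈ Metric.closedBall lam0 δ := by
    rw [Metric.mem_closedBall, dist_eq_norm]
    calc _ ≤ C * (δ / C) := hfw.trans (by gcongr; exact hz.le.trans (min_le_right _ _))
      _ = δ := mul_div_cancel₀ δ hC.ne'
  have hx : ‖w.1‖ ≤ Bx := hBx _ hμ w.1 (eval_map_Rres_eq_zero hf hdeg hw)
  have hy : ‖w.2‖ ≤ By := hBy w hw hx
  have hzw' : ‖z‖ ≤ ‖w‖ + 1 := by linarith [norm_sub_norm_le z w]
  rw [Prod.norm_def w] at hzw'
  have : max ‖w.1‖ ‖w.2‖ ≤ max Bx By := max_le_max hx hy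
  linarith

theorem lojInfOn_Sy_lt_lojInfOn_Sfib (hf : f.Monic) (hdeg : 1 < f.natDegree) (lam0 : ℂ)
    (hneg : lojInfOn (fun z : ℂ × ℂ => pval f z.1 z.2 - lam0) (Sy f) < 0)
    (hbot : lojInfOn (fun z : ℂ × ℂ => pval f z.1 z.2 - lam0) (Sy f) ≠ ⊥) :
    lojInfOn (fun z : ℂ × ℂ => pval f z.1 z.2 - lam0) (Sy f) <
      lojInfOn (fun z : ℂ × ℂ => pval (derivative f) z.1 z.2) (Sfib f lam0) := by
  obtain ⟨r, hr⟩ : ∃ r : ℝ, lojInfOn (fun z : ℂ × ℂ => pval f z.1 z.2 - lam0) (Sy f) = r :=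
    ⟨_, (EReal.coe_toReal (hneg.trans EReal.zero_lt_top).ne hbot).symm⟩
  rw [hr, ← EReal.coe_zero, EReal.coe_lt_coe_iff] at hneg
  set k : ℝ := 1 + ((f.natDegree - 1 : ℕ) : ℝ)⁻¹
  have hk : 1 < k := lt_add_of_pos_right 1 (inv_pos.mpr (by exact_mod_cast (by omega)))
  obtain ⟨ν, hν, hrν⟩ := exists_mem_lojExponents_gt (c := r * k)
    (by rw [hr]; exact EReal.coe_lt_coe_iff.mpr (by nlinarith))
  have hνr : ν ≤ r := EReal.coe_le_coe_iff.mp (hr ▸ coe_le_lojInfOn hν)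
  have hνk := div_mem_lojExponents_of_near (T := Sfib f lam0) (k := k)
    (C := 2 ^ (f.natDegree - 1)) (by linarith) (by linarith) (by positivity) hν
    fun z hz hz1 => by
      obtain ⟨w, hw, hzw, hfw⟩ := exists_mem_Sy_near hf hdeg z hz1.le
      exact ⟨w, hw, hzw, by rwa [show pval f z.1 z.2 = lam0 from hz] at hfw⟩
  rw [hr]
  exact (EReal.coe_lt_coe_iff.mpr ((lt_div_iff₀ (by linarith)).mpr hrν)).trans_le
    (coe_le_lojInfOn hνk)

end Plane

/-- Theorem 3.2. -/
theorem stmt2 (f : Polynomial (Polynomial ℂ)) (hf : NormalForm f)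
    (hdeg : 1 < f.natDegree) (lam0 : ℂ)
    (hloj : lojInfOn
      (fun z : ℂ × ℂ => (pval f z.1 z.2 - lam0, pval (derivative f) z.1 z.2))
      Set.univ < 0) :
    (lojInfOn (fun z : ℂ × ℂ => (pval f z.1 z.2 - lam0, pval (derivative f) z.1 z.2))
        Set.univ =
      lojInfOn (fun z : ℂ × ℂ => pval f z.1 z.2 - lam0) (Sy f)) ∧
    lam0 ∈ LambdaSet f ∧
    (lojInfOn (fun z : ℂ × ℂ => (pval f z.1 z.2 - lam0, pval (derivative f) z.1 z.2))
        Set.univ ≠ ⊥ →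
      lojInfOn (fun z : ℂ × ℂ => pval f z.1 z.2 - lam0) (Sy f) <
        lojInfOn (fun z : ℂ × ℂ => pval (derivative f) z.1 z.2) (Sfib f lam0)) := by
  have h0 := zero_notMem_lojExponents hloj
  have heq : lojInfOn
      (fun z : ℂ × ℂ => (pval f z.1 z.2 - lam0, pval (derivative f) z.1 z.2)) Set.univ =
      lojInfOn (fun z : ℂ × ℂ => pval f z.1 z.2 - lam0) (Sy f) := by
    rw [lojInfOn_eq_sSup, lojInfOn_eq_sSup, lojExponents_pair_eq hf.1 hdeg lam0 h0]
  refine ⟨heq, mem_LambdaSet_of_zero_notMem hf.1 hdeg lam0 h0, fun hbot => ?_⟩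
  rw [heq] at hloj hbot
  exact lojInfOn_Sy_lt_lojInfOn_Sfib hf.1 hdeg lam0 hloj hbot

end
end

section
/- Let f : ℂⁿ → ℂ, n ≥ 2, be a non-constant polynomial and λ₀ ∈ ℂ. If λ₀ ∉ K∞(f) and there exists a meromorphic curve Φ in ℂⁿ with deg Φ > 0 such that deg((f−λ₀) ∘ Φ) < 0 and deg(∇f ∘ Φ) = −deg Φ, then 𝓛_{∞,λ₀}(f) = 𝓛̃_{∞,λ₀}(f) = −1. -/
/-!
The Malgrange condition at `λ₀` gives `η > 0` with `‖z‖ * ‖∇f z‖ ≥ η` for large `z` with `f z`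
near `λ₀`. This gives `𝓛̃ ≥ -1` directly, and along any meromorphic curve `Ψ` tending to infinity
in the fibre it forces `deg Ψ + deg (∇f ∘ Ψ) ≥ 0`, so every quotient in the infimum defining `𝓛`
is `≥ -1`. The given curve `Φ` attains the quotient `-1`; comparing `‖∇f (Φ t)‖ = O(‖t‖ ^ (-d))`
with `‖Φ t‖ ^ ν ≍ ‖t‖ ^ (d ν)`, where `d = deg Φ > 0`, shows that every exponent `ν` admissible
for `𝓛̃` is at most `-1`. Degrees turn into growth rates through the Laurent expansion at
infinity: `φ t ≍ ‖t‖ ^ deg φ` along the cobounded filter of `ℂ`.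
-/

open Polynomial

noncomputable section
open scoped Classical

open Filter Topology Asymptotics Bornology

section NormRpow

variable {E : Type*} [SeminormedAddCommGroup E]

lemma isBigO_norm_rpow_of_le {a d : ℝ} (h : a ≤ d) :
    (fun t : E => ‖t‖ ^ a) =O[cobounded E] fun t => ‖t‖ ^ d := by
  refine IsBigO.of_bound' ?_
  filter_upwards [tendsto_norm_cobounded_atTop.eventually_ge_atTop 1] with t ht
  rw [Real.norm_of_nonneg (by positivity), Real.norm_of_nonneg (by positivity)]
  exact Real.rpow_le_rpow_of_exponent_le ht h

lemma le_of_isBigO_norm_rpow [NeBot (cobounded E)] {p q : ℝ}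
    (h : (fun t : E => ‖t‖ ^ p) =O[cobounded E] fun t => ‖t‖ ^ q) : p ≤ q := by
  by_contra! hqp
  obtain ⟨C, hC⟩ := h.bound
  have hgrow := (tendsto_rpow_atTop (sub_pos.2 hqp)).comp (tendsto_norm_cobounded_atTop (E := E))
  obtain ⟨t, hbound, hbig, hpos⟩ := (hC.and ((hgrow.eventually_gt_atTop C).and
    ((tendsto_norm_cobounded_atTop (E := E)).eventually_gt_atTop 0))).exists
  simp only [Function.comp_apply] at hbig
  rw [Real.norm_of_nonneg (by positivity), Real.norm_of_nonneg (by positivity),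
    show p = (p - q) + q by ring, Real.rpow_add hpos] at hbound
  have := Real.rpow_pos_of_pos hpos q
  nlinarith

end NormRpow

lemma EReal.neg_one_le_div_of_add_nonneg {x y : EReal} (hy : 0 < y) (hy' : y ≠ ⊤)
    (h : 0 ≤ y + x) : -1 ≤ x / y := by
  lift y to ℝ using ⟨hy', ne_bot_of_gt hy⟩
  have hy0 : 0 < y := EReal.coe_pos.1 hy
  induction x using EReal.rec with
  | bot => simp at h
  | coe x =>
    rw [← EReal.coe_div, show (-1 : EReal) = ((-1 : ℝ) : EReal) by norm_num,
      EReal.coe_le_coe_iff, le_div_iff₀ hy0]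
    have : 0 ≤ y + x := by exact_mod_cast h
    linarith
  | top => simp [EReal.top_div_of_pos_ne_top hy (EReal.coe_ne_top y)]

lemma degInf_of_meromorphicOrderAt_eq_top {φ : ℂ → ℂ} (h : MeroInf φ)
    (hm : meromorphicOrderAt (fun t => φ t⁻¹) 0 = ⊤) : degInf φ = ⊥ := by
  rw [degInf, dif_pos h, hm]; rfl

lemma degInf_of_meromorphicOrderAt_eq_coe {φ : ℂ → ℂ} (h : MeroInf φ) {m : ℤ}
    (hm : meromorphicOrderAt (fun t => φ t⁻¹) 0 = m) : degInf φ = ((-m : ℝ) : EReal) := by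
  rw [degInf, dif_pos h, hm]; simp [WithTop.recTopCoe]

lemma degInf_ne_top (φ : ℂ → ℂ) : degInf φ ≠ ⊤ := by
  by_cases h : MeroInf φ
  · cases hm : meromorphicOrderAt (fun t => φ t⁻¹) 0 with
    | top => simp [degInf_of_meromorphicOrderAt_eq_top h hm]
    | coe m => simp [degInf_of_meromorphicOrderAt_eq_coe h hm]
  · simp [degInf, h]

namespace MeroInf

variable {φ : ℂ → ℂ}

lemma eventually_eq_zero (h : MeroInf φ) (h0 : degInf φ = ⊥) :
    φ =ᶠ[cobounded ℂ] 0 := by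
  cases hm : meromorphicOrderAt (fun t => φ t⁻¹) 0 with
  | top =>
    filter_upwards [tendsto_inv₀_cobounded'.eventually (meromorphicOrderAt_eq_top_iff.mp hm)]
      with t ht
    simpa using ht
  | coe m => simp [degInf_of_meromorphicOrderAt_eq_coe h hm] at h0

lemma isTheta (h : MeroInf φ) {a : ℝ} (ha : degInf φ = a) :
    φ =Θ[cobounded ℂ] fun t => ‖t‖ ^ a := by
  cases hm : meromorphicOrderAt (fun t => φ t⁻¹) 0 with
  | top => simp [degInf_of_meromorphicOrderAt_eq_top h hm] at ha
  | coe m =>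
    have ham : a = -m := by
      rw [degInf_of_meromorphicOrderAt_eq_coe h hm] at ha; exact_mod_cast ha.symm
    have hc := MeromorphicAt.meromorphicTrailingCoeffAt_ne_zero h (by simp [hm])
    -- `t ^ m * φ t` tends to the trailing coefficient of `s ↦ φ s⁻¹` at `0`, which is nonzero.
    have hlim := (MeromorphicAt.tendsto_nhds_meromorphicTrailingCoeffAt h).comp
      tendsto_inv₀_cobounded'
    rw [hm] at hlim
    have hpow : (fun t : ℂ => t ^ (-m)) =Θ[cobounded ℂ] φ := by
      refine isTheta_of_div_tendsto_nhds_ne_zero (hlim.congr fun t => ?_) hc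
      simp [div_eq_mul_inv, mul_comm, zpow_neg]
    refine hpow.symm.trans (IsTheta.of_norm_eventuallyEq_norm (Eventually.of_forall fun t => ?_))
    dsimp only
    rw [ham, Real.norm_of_nonneg (by positivity), Real.rpow_neg (norm_nonneg _),
      Real.rpow_intCast, norm_zpow, zpow_neg]

lemma isBigO_rpow (h : MeroInf φ) {d : ℝ} (hd : degInf φ ≤ d) :
    φ =O[cobounded ℂ] fun t => ‖t‖ ^ d := by
  induction hφ : degInf φ using EReal.rec with
  | bot => exact (h.eventually_eq_zero hφ).trans_isBigO (isBigO_zero _ _)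
  | coe a =>
    rw [hφ, EReal.coe_le_coe_iff] at hd
    exact (h.isTheta hφ).isBigO.trans (isBigO_norm_rpow_of_le hd)
  | top => exact absurd hφ (degInf_ne_top φ)

lemma tendsto_zero (h : MeroInf φ) (hneg : degInf φ < 0) : Tendsto φ (cobounded ℂ) (𝓝 0) := by
  obtain ⟨d, hd, hd0⟩ := EReal.lt_iff_exists_real_btwn.1 hneg
  refine (h.isBigO_rpow hd.le).trans_tendsto ?_
  have hd0' : 0 < -d := neg_pos.2 (EReal.coe_lt_coe_iff.1 hd0)
  simpa [Function.comp_def] using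
    (tendsto_rpow_neg_atTop hd0').comp (tendsto_norm_cobounded_atTop (E := ℂ))

end MeroInf

namespace IsMeroCurve

variable {n : ℕ} {Ψ : ℂ → Fin n → ℂ}

lemma meroInf_eval (h : IsMeroCurve Ψ) (P : MvPolynomial (Fin n) ℂ) :
    MeroInf fun t => MvPolynomial.eval (Ψ t) P := by
  induction P using MvPolynomial.induction_on with
  | C a => simp [MeroInf]
  | add p q hp hq => simpa [MeroInf, Pi.add_def] using hp.add hq
  | mul_X p i hp => simpa [MeroInf, Pi.mul_def] using hp.mul (h i)

lemma mgrad (h : IsMeroCurve Ψ) (f : MvPolynomial (Fin n) ℂ) :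
    IsMeroCurve fun t => mgrad f (Ψ t) :=
  fun i => h.meroInf_eval (MvPolynomial.pderiv i f)

lemma degCurve_ne_top (Ψ : ℂ → Fin n → ℂ) : degCurve Ψ ≠ ⊤ := by
  rcases isEmpty_or_nonempty (Fin n) with _ | _
  · simp [degCurve]
  · obtain ⟨i, hi⟩ := exists_eq_ciSup_of_finite (f := fun i => degInf fun t => Ψ t i)
    rw [degCurve, ← hi]
    exact degInf_ne_top _

lemma exists_degCurve_eq_of_pos (hpos : 0 < degCurve Ψ) : ∃ d : ℝ, 0 < d ∧ degCurve Ψ = d := by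
  refine ⟨_, ?_, (EReal.coe_toReal (degCurve_ne_top Ψ) (ne_bot_of_gt hpos)).symm⟩
  exact EReal.toReal_pos hpos (degCurve_ne_top Ψ)

lemma isBigO (h : IsMeroCurve Ψ) {d : ℝ} (hd : degCurve Ψ ≤ d) :
    Ψ =O[cobounded ℂ] fun t => ‖t‖ ^ d :=
  isBigO_pi.2 fun i => (h i).isBigO_rpow ((le_iSup (fun i => degInf fun t => Ψ t i) i).trans hd)

lemma eventually_eq_zero (h : IsMeroCurve Ψ) (h0 : degCurve Ψ = ⊥) :
    Ψ =ᶠ[cobounded ℂ] 0 := by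
  have hcomp : ∀ i, degInf (fun t => Ψ t i) = ⊥ := fun i =>
    le_bot_iff.1 (h0 ▸ le_iSup (fun i => degInf fun t => Ψ t i) i)
  filter_upwards [eventually_all.2 fun i => (h i).eventually_eq_zero (hcomp i)] with t ht
  exact funext ht

lemma isTheta (h : IsMeroCurve Ψ) {d : ℝ} (hd : degCurve Ψ = d) :
    Ψ =Θ[cobounded ℂ] fun t => ‖t‖ ^ d := by
  have : Nonempty (Fin n) := by
    by_contra hempty
    rw [not_nonempty_iff] at hempty
    simp [degCurve] at hd
  obtain ⟨i, hi⟩ := exists_eq_ciSup_of_finite (f := fun i => degInf fun t => Ψ t i)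
  refine ⟨h.isBigO hd.le, ((h i).isTheta (hi.trans hd)).symm.isBigO.trans ?_⟩
  exact isBigO_of_le _ fun t => norm_le_pi_norm (Ψ t) i

lemma tendsto_cobounded (h : IsMeroCurve Ψ) (hpos : 0 < degCurve Ψ) :
    Tendsto Ψ (cobounded ℂ) (cobounded (Fin n → ℂ)) := by
  obtain ⟨d, hd0, hd⟩ := exists_degCurve_eq_of_pos hpos
  rw [← tendsto_norm_atTop_iff_cobounded]
  refine ((h.isTheta hd).tendsto_norm_atTop_iff).2 ?_
  refine ((tendsto_rpow_atTop hd0).comp tendsto_norm_cobounded_atTop).congr fun t => ?_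
  exact (Real.norm_of_nonneg (Real.rpow_nonneg (norm_nonneg t) d)).symm

lemma degCurve_add_degCurve_nonneg {m : ℕ} {Γ : ℂ → Fin m → ℂ} (hΨ : IsMeroCurve Ψ)
    (hΓ : IsMeroCurve Γ) {η : ℝ} (hη : 0 < η)
    (h : ∀ᶠ t in cobounded ℂ, η ≤ ‖Ψ t‖ * ‖Γ t‖) : 0 ≤ degCurve Ψ + degCurve Γ := by
  have hΨ_ne : degCurve Ψ ≠ ⊥ := fun h0 => by
    obtain ⟨t, ht, hz⟩ := (h.and (hΨ.eventually_eq_zero h0)).exists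
    simp [hz] at ht; linarith
  have hΓ_ne : degCurve Γ ≠ ⊥ := fun h0 => by
    obtain ⟨t, ht, hz⟩ := (h.and (hΓ.eventually_eq_zero h0)).exists
    simp [hz] at ht; linarith
  rw [← EReal.coe_toReal (degCurve_ne_top Ψ) hΨ_ne, ← EReal.coe_toReal (degCurve_ne_top Γ) hΓ_ne]
  set e := (degCurve Ψ).toReal
  set g := (degCurve Γ).toReal
  have hconst : (fun t : ℂ => ‖t‖ ^ (0 : ℝ)) =O[cobounded ℂ] fun t => ‖Ψ t‖ * ‖Γ t‖ := by
    refine IsBigO.of_bound η⁻¹ ?_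
    filter_upwards [h] with t ht
    rw [Real.rpow_zero, norm_one, Real.norm_of_nonneg (by positivity), ← div_eq_inv_mul,
      one_le_div hη]
    exact ht
  have hprod : (fun t => ‖Ψ t‖ * ‖Γ t‖) =O[cobounded ℂ] fun t : ℂ => ‖t‖ ^ (e + g) := by
    have hmul := (hΨ.isBigO (EReal.le_coe_toReal (degCurve_ne_top Ψ))).norm_left.mul
      (hΓ.isBigO (EReal.le_coe_toReal (degCurve_ne_top Γ))).norm_left
    refine hmul.trans_eventuallyEq ?_
    filter_upwards [tendsto_norm_cobounded_atTop.eventually_gt_atTop 0] with t ht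
    exact (Real.rpow_add ht e g).symm
  exact_mod_cast le_of_isBigO_norm_rpow (hconst.trans hprod)

end IsMeroCurve

section Malgrange

variable {n : ℕ} {f : MvPolynomial (Fin n) ℂ} {lam0 : ℂ} {Φ : ℂ → Fin n → ℂ}

lemma IsMeroCurve.eventually_near_fiber (hΦ : IsMeroCurve Φ) (hpos : 0 < degCurve Φ)
    (hfib : degInf (fun t => mval f (Φ t) - lam0) < 0) (R : ℝ) {δ : ℝ} (hδ : 0 < δ) :
    ∀ᶠ t in cobounded ℂ, R < ‖Φ t‖ ∧ ‖mval f (Φ t) - lam0‖ < δ := by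
  have hmero : MeroInf fun t => mval f (Φ t) - lam0 :=
    (hΦ.meroInf_eval f).sub (MeromorphicAt.const lam0 0)
  refine ((hΦ.tendsto_cobounded hpos).eventually
    (tendsto_norm_cobounded_atTop.eventually_gt_atTop R)).and ?_
  simpa using (hmero.tendsto_zero hfib).eventually (Metric.ball_mem_nhds 0 hδ)

lemma exists_bound_of_notMem_Kinf (h : lam0 ∉ Kinf f) :
    ∃ η δ R : ℝ, 0 < η ∧ 0 < δ ∧ 0 < R ∧
      ∀ p : Fin n → ℂ, R < ‖p‖ → ‖mval f p - lam0‖ < δ → η < ‖p‖ * ‖mgrad f p‖ := by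
  simpa [Kinf] using h

lemma neg_one_le_lojFiber (h : lam0 ∉ Kinf f) : -1 ≤ lojFiber f lam0 := by
  obtain ⟨η, δ, R, hη, hδ, -, hM⟩ := exists_bound_of_notMem_Kinf h
  refine le_sInf ?_
  rintro _ ⟨Ψ, hΨ, hpos, hfib, rfl⟩
  refine EReal.neg_one_le_div_of_add_nonneg hpos (IsMeroCurve.degCurve_ne_top Ψ)
    (hΨ.degCurve_add_degCurve_nonneg (hΨ.mgrad f) hη ?_)
  filter_upwards [hΨ.eventually_near_fiber hpos hfib R hδ] with t ht
  exact (hM _ ht.1 ht.2).le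

lemma neg_one_le_lojTilde (h : lam0 ∉ Kinf f) : -1 ≤ lojTilde f lam0 := by
  obtain ⟨η, δ, R, hη, hδ, -, hM⟩ := exists_bound_of_notMem_Kinf h
  have hexp : (-1 : ℝ) ∈ {ν : ℝ | ∃ A B : ℝ, 0 < A ∧ 0 < B ∧
      ∀ z ∈ mval f ⁻¹' Metric.ball lam0 δ, B < ‖z‖ → A * Real.rpow ‖z‖ ν ≤ ‖mgrad f z‖} := by
    refine ⟨η, max R 1, hη, by positivity, fun z hz hzR => ?_⟩
    have hz0 : 0 < ‖z‖ := lt_of_lt_of_le one_pos (le_max_right R 1) |>.trans hzR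
    change η * ‖z‖ ^ (-1 : ℝ) ≤ _
    rw [Real.rpow_neg_one, ← div_eq_mul_inv, div_le_iff₀ hz0, mul_comm]
    exact (hM z ((le_max_left R 1).trans_lt hzR) (by simpa [dist_eq_norm] using hz)).le
  calc (-1 : EReal) = ((-1 : ℝ) : EReal) := by norm_num
    _ ≤ lojInfOn (mgrad f) (mval f ⁻¹' Metric.ball lam0 δ) := le_sSup ⟨-1, hexp, rfl⟩
    _ ≤ lojTilde f lam0 :=
      le_iSup (fun δ : {d : ℝ // 0 < d} => lojInfOn (mgrad f) (mval f ⁻¹' Metric.ball lam0 δ.1))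
        ⟨δ, hδ⟩

lemma lojFiber_le_neg_one (hΦ : IsMeroCurve Φ) (hpos : 0 < degCurve Φ)
    (hfib : degInf (fun t => mval f (Φ t) - lam0) < 0)
    (hgrad : degCurve (fun t => mgrad f (Φ t)) = -degCurve Φ) : lojFiber f lam0 ≤ -1 := by
  obtain ⟨d, hd0, hd⟩ := IsMeroCurve.exists_degCurve_eq_of_pos hpos
  refine sInf_le ⟨Φ, hΦ, hpos, hfib, ?_⟩
  rw [hgrad, hd, ← EReal.coe_neg, ← EReal.coe_div, neg_div, div_self hd0.ne']
  norm_num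

lemma lojTilde_le_neg_one (hΦ : IsMeroCurve Φ) (hpos : 0 < degCurve Φ)
    (hfib : degInf (fun t => mval f (Φ t) - lam0) < 0)
    (hgrad : degCurve (fun t => mgrad f (Φ t)) = -degCurve Φ) : lojTilde f lam0 ≤ -1 := by
  refine iSup_le fun δ => sSup_le ?_
  rintro _ ⟨ν, ⟨A, B, hA, -, hbound⟩, rfl⟩
  obtain ⟨d, hd0, hd⟩ := IsMeroCurve.exists_degCurve_eq_of_pos hpos
  have hnorm : (fun t => ‖Φ t‖ ^ ν) =Θ[cobounded ℂ] fun t : ℂ => ‖t‖ ^ (d * ν) := by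
    refine ((isTheta_norm_left.2 (hΦ.isTheta hd)).rpow
      (Eventually.of_forall fun t => norm_nonneg _)
      (Eventually.of_forall fun t => by positivity)).trans_eventuallyEq ?_
    exact Eventually.of_forall fun t => (Real.rpow_mul (norm_nonneg t) d ν).symm
  have hgradO : (fun t => mgrad f (Φ t)) =O[cobounded ℂ] fun t : ℂ => ‖t‖ ^ (-d) :=
    (hΦ.mgrad f).isBigO (by rw [hgrad, hd]; rfl)
  have hlower : (fun t => ‖Φ t‖ ^ ν) =O[cobounded ℂ] fun t => mgrad f (Φ t) := by
    refine IsBigO.of_bound A⁻¹ ?_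
    filter_upwards [hΦ.eventually_near_fiber hpos hfib B δ.2] with t ht
    have := hbound (Φ t) (by simpa [dist_eq_norm] using ht.2) ht.1
    rw [Real.norm_of_nonneg (by positivity), ← div_eq_inv_mul, le_div_iff₀ hA, mul_comm]
    exact this
  have hdν := le_of_isBigO_norm_rpow (hnorm.symm.isBigO.trans (hlower.trans hgradO))
  have hν : ν ≤ -1 := by nlinarith
  exact (EReal.coe_le_coe_iff.2 hν).trans_eq (by norm_num)

end Malgrange

theorem stmt18_general (n : ℕ) (f : MvPolynomial (Fin n) ℂ) (lam0 : ℂ)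
    (h1 : lam0 ∉ Kinf f)
    (h2 : ∃ Φ : ℂ → Fin n → ℂ, IsMeroCurve Φ ∧ 0 < degCurve Φ ∧
      degInf (fun t => mval f (Φ t) - lam0) < 0 ∧
      degCurve (fun t => mgrad f (Φ t)) = -degCurve Φ) :
    lojFiber f lam0 = -1 ∧ lojTilde f lam0 = -1 := by
  obtain ⟨Φ, hΦ, hpos, hfib, hgrad⟩ := h2
  exact ⟨le_antisymm (lojFiber_le_neg_one hΦ hpos hfib hgrad) (neg_one_le_lojFiber h1),
    le_antisymm (lojTilde_le_neg_one hΦ hpos hfib hgrad) (neg_one_le_lojTilde h1)⟩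

/-- Proposition 6.2.1. -/
theorem stmt18 (n : ℕ) (hn : 2 ≤ n) (f : MvPolynomial (Fin n) ℂ)
    (hf : 0 < f.totalDegree) (lam0 : ℂ)
    (h1 : lam0 ∉ Kinf f)
    (h2 : ∃ Φ : ℂ → Fin n → ℂ, IsMeroCurve Φ ∧ 0 < degCurve Φ ∧
      degInf (fun t => mval f (Φ t) - lam0) < 0 ∧
      degCurve (fun t => mgrad f (Φ t)) = -degCurve Φ) :
    lojFiber f lam0 = -1 ∧ lojTilde f lam0 = -1 :=
  stmt18_general n f lam0 h1 h2
end
end
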